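/- Let G be a directed graph with red edges (symmetric) and blue edges, and let G' be the quotient graph obtained by contracting each red-connected component (platform) to a single vertex, with an edge between two platforms whenever some blue edge of G connects them. Then there exists a walk from s to t in G using red edges freely and each blue edge only when its target platform is previously unvisited, if and only if there is a path in G' from the platform of s to the platform of t. -/

import Mathlib

/-- Platforms: red-connected components, i.e. classes of the equivalence closure
of the red relation. -/
def plat {V : Type*} (red : V → V → Prop) : V → V → Prop := Relation.EqvGen red

/-- A walk using red edges freely, and a blue edge only when the platform of its
target has not been visited earlier in the walk. -/
def IsUnvisitedWalk {V : Type*} (red blue : V → V → Prop) (w : List V) : Prop :=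
  ∀ i : ℕ, ∀ h : i + 1 < w.length,
    red (w[i]'(Nat.lt_of_succ_lt h)) (w[i+1]'h) ∨
      (blue (w[i]'(Nat.lt_of_succ_lt h)) (w[i+1]'h) ∧
        ∀ j : ℕ, ∀ hj : j ≤ i, ¬ plat red (w[j]'(by omega)) (w[i+1]'h))

/-- Adjacency of platforms in the contraction `G'`: two vertices' platforms are
joined when some blue edge of `G` connects the platforms. -/
def PlatAdj {V : Type*} (red blue : V → V → Prop) (u v : V) : Prop :=
  ∃ a b, plat red u a ∧ blue a b ∧ plat red b v

section Aux

variable {V : Type*} {red blue : V → V → Prop}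

lemma plat_refl (u : V) : plat red u u := Relation.EqvGen.refl u

lemma plat_symm {u v : V} (h : plat red u v) : plat red v u :=
  Relation.EqvGen.symm _ _ h

lemma plat_trans {u v w : V} (h1 : plat red u v) (h2 : plat red v w) :
    plat red u w := Relation.EqvGen.trans _ _ _ h1 h2

lemma rtg_of_plat (hsymm : Symmetric red) {u v : V} (h : plat red u v) :
    Relation.ReflTransGen red u v := by
  induction h with
  | rel a b hab => exact Relation.ReflTransGen.single hab
  | refl a => exact Relation.ReflTransGen.refl
  | symm a b _ ih => haveI : Std.Symm red := ⟨fun a b h => hsymm h⟩; exact Std.Symm.symm _ _ ih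
  | trans a b c _ _ ih1 ih2 => exact ih1.trans ih2

lemma plat_of_rtg {u v : V} (h : Relation.ReflTransGen red u v) : plat red u v := by
  induction h with
  | refl => exact plat_refl u
  | tail _ h ih => exact plat_trans ih (Relation.EqvGen.rel _ _ h)

lemma platAdj_left {u u' v : V} (h : plat red u u') (ha : PlatAdj red blue u' v) :
    PlatAdj red blue u v := by
  obtain ⟨a, b, h1, h2, h3⟩ := ha
  exact ⟨a, b, plat_trans h h1, h2, h3⟩

lemma unvisited_append_red {w : List V} (hw : w ≠ [])
    (hwalk : IsUnvisitedWalk red blue w) {v : V} (hred : red (w.getLast hw) v) :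
    IsUnvisitedWalk red blue (w ++ [v]) := by
  intro i h
  simp only [List.length_append, List.length_singleton] at h
  by_cases hi : i + 1 < w.length
  · have h0 : i < w.length := Nat.lt_of_succ_lt hi
    rcases hwalk i hi with hr | ⟨hb, hj⟩
    · left
      rw [List.getElem_append_left h0, List.getElem_append_left hi]
      exact hr
    · right
      rw [List.getElem_append_left h0, List.getElem_append_left hi]
      refine ⟨hb, ?_⟩
      intro j hj'
      rw [List.getElem_append_left (show j < w.length by omega)]
      exact hj j hj'
  · have hlen : i + 1 = w.length := by omega
    have h1 : i < w.length := by omega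
    left
    rw [List.getElem_append_left h1,
        List.getElem_append_right (show w.length ≤ i + 1 by omega)]
    have hx : w[i] = w.getLast hw := by
      rw [List.getLast_eq_getElem]
      congr 1
      omega
    rw [hx, List.getElem_singleton]
    exact hred

lemma unvisited_append_blue {w : List V} (hw : w ≠ [])
    (hwalk : IsUnvisitedWalk red blue w) {v : V} (hblue : blue (w.getLast hw) v)
    (hfresh : ∀ x ∈ w, ¬ plat red x v) :
    IsUnvisitedWalk red blue (w ++ [v]) := by
  intro i h
  simp only [List.length_append, List.length_singleton] at h
  by_cases hi : i + 1 < w.length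
  · have h0 : i < w.length := Nat.lt_of_succ_lt hi
    rcases hwalk i hi with hr | ⟨hb, hj⟩
    · left
      rw [List.getElem_append_left h0, List.getElem_append_left hi]
      exact hr
    · right
      rw [List.getElem_append_left h0, List.getElem_append_left hi]
      refine ⟨hb, ?_⟩
      intro j hj'
      rw [List.getElem_append_left (show j < w.length by omega)]
      exact hj j hj'
  · have hlen : i + 1 = w.length := by omega
    have h1 : i < w.length := by omega
    right
    have hx : w[i] = w.getLast hw := by
      rw [List.getLast_eq_getElem]
      congr 1
      omega
    rw [List.getElem_append_left h1,
        List.getElem_append_right (show w.length ≤ i + 1 by omega), hx,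
        List.getElem_singleton]
    refine ⟨hblue, ?_⟩
    intro j hj'
    rw [List.getElem_append_left (show j < w.length by omega)]
    exact hfresh _ (List.getElem_mem _)

lemma red_extend {w : List V} (hw : w ≠ []) (hwalk : IsUnvisitedWalk red blue w)
    {a : V} (h : Relation.ReflTransGen red (w.getLast hw) a) :
    ∃ (w' : List V) (hw' : w' ≠ []), w'.head hw' = w.head hw ∧
      w'.getLast hw' = a ∧ IsUnvisitedWalk red blue w' ∧
      ∀ x ∈ w', x ∈ w ∨ plat red (w.getLast hw) x := by
  induction h with
  | refl => exact ⟨w, hw, rfl, rfl, hwalk, fun x hx => Or.inl hx⟩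
  | @tail b c hub hred ih =>
    obtain ⟨w', hw', hh, hl, hwalk', hmem⟩ := ih
    refine ⟨w' ++ [c], by simp, ?_, ?_, ?_, ?_⟩
    · rw [List.head_append_of_ne_nil hw']; exact hh
    · exact List.getLast_concat
    · exact unvisited_append_red hw' hwalk' (hl ▸ hred)
    · intro x hx
      rcases List.mem_append.mp hx with hx | hx
      · exact hmem x hx
      · right
        rw [List.mem_singleton] at hx
        subst hx
        exact plat_of_rtg (hub.tail hred)

lemma walk_of_simple_chain (hsymm : Symmetric red) :
    ∀ (M : List V) (hM : M ≠ []), List.Chain' (PlatAdj red blue) M →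
      List.Pairwise (fun a b => ¬ plat red a b) M →
      ∃ (w : List V) (hw : w ≠ []), w.head hw = M.head hM ∧
        plat red (w.getLast hw) (M.getLast hM) ∧ IsUnvisitedWalk red blue w ∧
        ∀ x ∈ w, ∃ m ∈ M, plat red m x := by
  intro M
  induction M using List.reverseRecOn with
  | nil => intro h; exact absurd rfl h
  | append_singleton M₀ m ih =>
    intro hM hchain hpair
    rcases eq_or_ne M₀ [] with rfl | h0
    · refine ⟨[m], by simp, by simp, ?_, ?_, ?_⟩
      · simpa using plat_refl m
      · intro i h; simp at h
      · intro x hx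
        simp only [List.mem_singleton] at hx
        exact ⟨m, by simp, by rw [hx]; exact plat_refl m⟩
    · obtain ⟨w, hw, hh, hl, hwalk, hcov⟩ :=
        ih h0 (hchain.prefix ⟨[m], rfl⟩)
          (hpair.sublist (List.sublist_append_left M₀ [m]))
      obtain ⟨hc1, hc2, hadj⟩ := List.isChain_append.mp hchain
      have hPA : PlatAdj red blue (M₀.getLast h0) m := by
        apply hadj
        · rw [List.getLast?_eq_getLast h0]; exact rfl
        · rfl
      obtain ⟨a, b, hpa, hblue, hpb⟩ := hPA
      have hrtga : Relation.ReflTransGen red (w.getLast hw) a :=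
        rtg_of_plat hsymm (plat_trans hl hpa)
      obtain ⟨w₁, hw₁, hh₁, hl₁, hwalk₁, hmem₁⟩ := red_extend hw hwalk hrtga
      have hpairmb : ∀ x ∈ M₀, ¬ plat red x m := by
        intro x hx
        have := (List.pairwise_append.mp hpair).2.2
        exact fun hc => this x hx m (by simp) hc
      have hfresh : ∀ x ∈ w₁, ¬ plat red x b := by
        intro x hx hxb
        have hcovx : ∃ m₀ ∈ M₀, plat red m₀ x := by
          rcases hmem₁ x hx with hx' | hx'
          · exact hcov x hx'
          · exact ⟨M₀.getLast h0, List.getLast_mem h0,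
              plat_trans (plat_symm hl) hx'⟩
        obtain ⟨m₀, hm₀, hpm₀⟩ := hcovx
        exact hpairmb m₀ hm₀ (plat_trans (plat_trans hpm₀ hxb) hpb)
      refine ⟨w₁ ++ [b], by simp, ?_, ?_, ?_, ?_⟩
      · rw [List.head_append_of_ne_nil hw₁, hh₁, hh,
          List.head_append_of_ne_nil h0]
      · rw [List.getLast_concat]
        have : (M₀ ++ [m]).getLast hM = m := List.getLast_concat
        rw [this]
        exact hpb
      · exact unvisited_append_blue hw₁ hwalk₁ (hl₁ ▸ hblue) hfresh
      · intro x hx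
        rcases List.mem_append.mp hx with hx | hx
        · rcases hmem₁ x hx with hx' | hx'
          · obtain ⟨m₀, hm₀, hpm₀⟩ := hcov x hx'
            exact ⟨m₀, List.mem_append_left _ hm₀, hpm₀⟩
          · exact ⟨M₀.getLast h0, List.mem_append_left _ (List.getLast_mem h0),
              plat_trans (plat_symm hl) hx'⟩
        · rw [List.mem_singleton] at hx
          subst hx
          exact ⟨m, List.mem_append_right _ (by simp), plat_symm hpb⟩

lemma deloop :
    ∀ (M : List V) (hM : M ≠ []), List.Chain' (PlatAdj red blue) M →
      ∃ (N : List V) (hN : N ≠ []), N.head hN = M.head hM ∧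
        plat red (N.getLast hN) (M.getLast hM) ∧
        List.Chain' (PlatAdj red blue) N ∧
        List.Pairwise (fun a b => ¬ plat red a b) N := by
  intro M
  induction M with
  | nil => intro h; exact absurd rfl h
  | cons a L ih =>
    intro hM hchain
    rcases eq_or_ne L [] with rfl | hL
    · exact ⟨[a], by simp, rfl, plat_refl a, List.isChain_singleton a, by simp⟩
    · obtain ⟨N, hN, hh, hl, hc, hp⟩ := ih hL hchain.tail
      have hlastM : (a :: L).getLast hM = L.getLast hL := List.getLast_cons hL
      by_cases hex : ∃ x ∈ N, plat red a x
      · obtain ⟨x, hxN, hax⟩ := hex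
        obtain ⟨P, S, rfl⟩ := List.append_of_mem hxN
        have hlastN : (P ++ x :: S).getLast hN =
            (x :: S).getLast (by simp) := by
          rw [List.getLast_append]
          simp
        rcases eq_or_ne S [] with rfl | hS
        · refine ⟨[a], by simp, rfl, ?_, List.isChain_singleton a, by simp⟩
          rw [hlastM]
          simp only [List.getLast_singleton] at hlastN
          exact plat_trans hax (hlastN ▸ hl)
        · obtain ⟨y, S', rfl⟩ := List.exists_cons_of_ne_nil hS
          have hcS : List.Chain' (PlatAdj red blue) (x :: y :: S') :=
            hc.suffix ⟨P, rfl⟩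
          have hpS : List.Pairwise (fun a b => ¬ plat red a b) (x :: y :: S') :=
            hp.sublist (List.sublist_append_right P _)
          refine ⟨a :: y :: S', by simp, rfl, ?_, ?_, ?_⟩
          · rw [hlastM]
            have h1 : (a :: y :: S').getLast (by simp) =
                (y :: S').getLast (by simp) := List.getLast_cons (by simp)
            have h2 : (x :: y :: S').getLast (by simp) =
                (y :: S').getLast (by simp) := List.getLast_cons (by simp)
            rw [h1, ← h2, ← hlastN]
            exact hl
          · rw [List.Chain', List.isChain_cons_cons]
            refine ⟨platAdj_left hax (List.isChain_cons_cons.mp hcS).1,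
              (List.isChain_cons_cons.mp hcS).2⟩
          · rw [List.pairwise_cons]
            refine ⟨?_, (List.pairwise_cons.mp hpS).2⟩
            intro z hz hcz
            exact (List.pairwise_cons.mp hpS).1 z hz (plat_trans (plat_symm hax) hcz)
      · push_neg at hex
        refine ⟨a :: N, by simp, rfl, ?_, ?_, ?_⟩
        · rw [hlastM, List.getLast_cons hN]
          exact hl
        · rw [List.Chain', List.isChain_cons]
          refine ⟨?_, hc⟩
          intro y hy
          rw [List.head?_eq_head hN] at hy
          obtain rfl : N.head hN = y := by injection hy
          rw [hh]
          have := (List.isChain_cons.mp hchain).1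
          apply this
          rw [List.head?_eq_head hL]; exact rfl
        · rw [List.pairwise_cons]
          exact ⟨hex, hp⟩

lemma walk_forward {w : List V} (hw : w ≠ []) (hwalk : IsUnvisitedWalk red blue w) :
    ∀ i, ∀ hi : i < w.length, ∃ x,
      Relation.ReflTransGen (PlatAdj red blue) (w.head hw) x ∧ plat red x w[i] := by
  intro i
  induction i with
  | zero =>
    intro hi
    refine ⟨w.head hw, Relation.ReflTransGen.refl, ?_⟩
    rw [List.getElem_zero hi]
    exact plat_refl _
  | succ i ih =>
    intro hi
    obtain ⟨x, hx, hpx⟩ := ih (by omega)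
    rcases hwalk i hi with hr | ⟨hb, _⟩
    · exact ⟨x, hx, plat_trans hpx (Relation.EqvGen.rel _ _ hr)⟩
    · exact ⟨w[i + 1], hx.tail ⟨w[i], w[i + 1], hpx, hb, plat_refl _⟩, plat_refl _⟩

end Aux

/-- There is a walk from `s` to `t` (red edges free, blue edges only into
previously unvisited platforms) iff there is a path in the contracted graph `G'`
from the platform of `s` to the platform of `t`. -/
theorem stmt1 {V : Type*} (red blue : V → V → Prop) (hsymm : Symmetric red)
    (s t : V) :
    (∃ (w : List V) (hne : w ≠ []),
        w.head hne = s ∧ w.getLast hne = t ∧ IsUnvisitedWalk red blue w) ↔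
      ∃ t', Relation.ReflTransGen (PlatAdj red blue) s t' ∧ plat red t' t := by
  constructor
  · rintro ⟨w, hne, hh, hl, hwalk⟩
    have hlen : w.length - 1 < w.length := by
      have := List.length_pos_iff.mpr hne; omega
    obtain ⟨x, hx, hpx⟩ := walk_forward hne hwalk (w.length - 1) hlen
    refine ⟨x, hh ▸ hx, ?_⟩
    rwa [← List.getLast_eq_getElem hne, hl] at hpx
  · rintro ⟨t', hrtg, hpt⟩
    obtain ⟨l, hchainL, hlast⟩ := List.exists_isChain_cons_of_relationReflTransGen hrtg
    have hchain : List.Chain' (PlatAdj red blue) (s :: l) := hchainL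
    obtain ⟨N, hN, hh, hl, hc, hp⟩ := deloop (s :: l) (by simp) hchain
    obtain ⟨w, hw, hwh, hwl, hwalk, _⟩ := walk_of_simple_chain hsymm N hN hc hp
    have hplat : plat red (w.getLast hw) t := by
      have h1 : plat red (N.getLast hN) t' := hlast ▸ hl
      exact plat_trans (plat_trans hwl h1) hpt
    obtain ⟨w', hw', hh', hl', hwalk', _⟩ :=
      red_extend hw hwalk (rtg_of_plat hsymm hplat)
    refine ⟨w', hw', ?_, hl', hwalk'⟩
    rw [hh', hwh, hh]
    simp
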